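/- arXiv:2601.04482 — 2 statements merged into one kernel-verified Lean document; each statement's English description precedes it below -/
import Mathlib

section
/- Let J be a real m×n matrix and λ > 0, and set P^λ = J (JᵀJ + λ²I)⁻¹ Jᵀ. Then for every f ∈ ℝᵐ, ‖P^λ f‖ ≤ (‖J‖²/(‖J‖² + λ²)) ‖f‖, where ‖J‖ is the ℓ²→ℓ² operator norm of J. In particular ‖P^λ f‖ < ‖f‖ for every nonzero f, i.e., the regularized projection is a strict contraction on ℝᵐ. -/
/-!
Write `f = (JJᵀ + λ²) g`. Since `Jᵀ (JJᵀ + λ²) = (JᵀJ + λ²) Jᵀ`, the projection is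
`P^λ f = JJᵀ g`, and `‖f‖² = ‖JJᵀg‖² + 2λ²‖Jᵀg‖² + λ⁴‖g‖²`. With `s = ‖J‖ = ‖Jᵀ‖` we have
`‖JJᵀg‖² ≤ s²‖Jᵀg‖²` and `‖JJᵀg‖² ≤ s⁴‖g‖²`; comparing `(s² + λ²)²‖JJᵀg‖²` with `s⁴‖f‖²`
term by term gives `(s² + λ²) ‖P^λ f‖ ≤ s² ‖f‖`.
-/

open Matrix
open scoped RealInnerProductSpace

namespace ContinuousLinearMap

variable {E F : Type*} [NormedAddCommGroup E] [InnerProductSpace ℝ E] [CompleteSpace E]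
  [NormedAddCommGroup F] [InnerProductSpace ℝ F] [CompleteSpace F]

theorem inner_apply_adjoint_apply_self (T : E →L[ℝ] F) (g : F) :
    ⟪T (T.adjoint g), g⟫ = ‖T.adjoint g‖ ^ 2 := by
  rw [← adjoint_inner_right, real_inner_self_eq_norm_sq]

theorem norm_apply_adjoint_apply_mul_le (T : E →L[ℝ] F) (g : F) {μ : ℝ} (hμ : 0 ≤ μ) :
    ‖T (T.adjoint g)‖ * (‖T‖ ^ 2 + μ) ≤ ‖T‖ ^ 2 * ‖T (T.adjoint g) + μ • g‖ := by
  set s := ‖T‖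
  have hTa : ‖T (T.adjoint g)‖ ≤ s * ‖T.adjoint g‖ := T.le_opNorm _
  have hTb : ‖T.adjoint g‖ ≤ s * ‖g‖ := by
    simpa only [LinearIsometryEquiv.norm_map] using T.adjoint.le_opNorm g
  have hexpand : ‖T (T.adjoint g) + μ • g‖ ^ 2
      = ‖T (T.adjoint g)‖ ^ 2 + 2 * μ * ‖T.adjoint g‖ ^ 2 + μ ^ 2 * ‖g‖ ^ 2 := by
    rw [norm_add_sq_real, inner_smul_right, inner_apply_adjoint_apply_self, norm_smul,
      Real.norm_of_nonneg hμ]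
    ring
  have hab : ‖T (T.adjoint g)‖ ^ 2 ≤ s ^ 2 * ‖T.adjoint g‖ ^ 2 := by
    rw [← mul_pow]; exact pow_le_pow_left₀ (norm_nonneg _) hTa 2
  have hbc : ‖T.adjoint g‖ ^ 2 ≤ s ^ 2 * ‖g‖ ^ 2 := by
    rw [← mul_pow]; exact pow_le_pow_left₀ (norm_nonneg _) hTb 2
  have hac : ‖T (T.adjoint g)‖ ^ 2 ≤ s ^ 2 * (s ^ 2 * ‖g‖ ^ 2) :=
    hab.trans (mul_le_mul_of_nonneg_left hbc (sq_nonneg s))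
  refine le_of_sq_le_sq ?_ (by positivity)
  rw [mul_pow, mul_pow, hexpand]
  -- the gap is `2μs²(s²‖T†g‖² - ‖TT†g‖²) + μ²(s⁴‖g‖² - ‖TT†g‖²)`
  linarith [mul_nonneg (by positivity : 0 ≤ 2 * μ * s ^ 2) (sub_nonneg.2 hab),
    mul_nonneg (sq_nonneg μ) (sub_nonneg.2 hac)]

end ContinuousLinearMap

namespace Matrix

variable {m n : Type*} [Fintype m] [Fintype n] [DecidableEq n]

theorem isUnit_transpose_mul_self_add_smul_one (J : Matrix m n ℝ) {μ : ℝ} (hμ : 0 < μ) :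
    IsUnit (Jᵀ * J + μ • 1) := by
  have hJ : (Jᵀ * J).PosSemidef :=
    conjTranspose_eq_transpose_of_trivial J ▸ posSemidef_conjTranspose_mul_self J
  exact (PosDef.posSemidef_add hJ (PosDef.one.smul hμ)).isUnit

/-- `P^λ` of the paper is `regularizedProjection J (λ ^ 2)`. -/
noncomputable def regularizedProjection (J : Matrix m n ℝ) (μ : ℝ) : Matrix m m ℝ :=
  J * (Jᵀ * J + μ • 1)⁻¹ * Jᵀ

variable [DecidableEq m]

theorem mul_mul_add_smul_one {R : Type*} [CommRing R] (A : Matrix m n R) (B : Matrix n m R)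
    (c : R) : A * (B * A + c • 1) = (A * B + c • 1) * A := by
  simp only [Matrix.mul_add, Matrix.add_mul, Matrix.mul_assoc, Matrix.mul_smul, Matrix.smul_mul,
    Matrix.mul_one, Matrix.one_mul]

theorem regularizedProjection_mul (J : Matrix m n ℝ) {μ : ℝ} (hμ : 0 < μ) :
    regularizedProjection J μ * (J * Jᵀ + μ • 1) = J * Jᵀ := by
  have hdet := (isUnit_iff_isUnit_det _).mp (isUnit_transpose_mul_self_add_smul_one J hμ)
  rw [regularizedProjection, Matrix.mul_assoc, mul_mul_add_smul_one, ← Matrix.mul_assoc,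
    Matrix.mul_assoc J, nonsing_inv_mul _ hdet, Matrix.mul_one]

theorem toEuclideanLin_toContinuousLinearMap_adjoint_apply (J : Matrix m n ℝ)
    (g : EuclideanSpace ℝ m) :
    (toEuclideanLin J).toContinuousLinearMap.adjoint g = toEuclideanLin Jᵀ g := by
  rw [← LinearMap.adjoint_toContinuousLinearMap, ← toEuclideanLin_conjTranspose_eq_adjoint,
    conjTranspose_eq_transpose_of_trivial]
  rfl

theorem norm_toEuclideanLin_regularizedProjection_mul_le (J : Matrix m n ℝ)
    {μ : ℝ} (hμ : 0 < μ) (f : EuclideanSpace ℝ m) :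
    ‖toEuclideanLin (regularizedProjection J μ) f‖ *
        (‖(toEuclideanLin J).toContinuousLinearMap‖ ^ 2 + μ) ≤
      ‖(toEuclideanLin J).toContinuousLinearMap‖ ^ 2 * ‖f‖ := by
  set D := J * Jᵀ + μ • 1
  have hD := (isUnit_iff_isUnit_det D).mp (by
    simpa only [transpose_transpose] using isUnit_transpose_mul_self_add_smul_one Jᵀ hμ)
  set g := toEuclideanLin D⁻¹ f
  have hf : f = toEuclideanLin D g := by
    simp [g, ← LinearMap.comp_apply, ← toLpLin_mul_same, mul_nonsing_inv _ hD]
  set T := (toEuclideanLin J).toContinuousLinearMap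
  have hTT : T (T.adjoint g) = toEuclideanLin (J * Jᵀ) g := by
    simp [T, toEuclideanLin_toContinuousLinearMap_adjoint_apply]
  have hPf : toEuclideanLin (regularizedProjection J μ) f = T (T.adjoint g) := by
    rw [hTT, hf, ← LinearMap.comp_apply, ← toLpLin_mul_same, regularizedProjection_mul J hμ]
  have hDg : toEuclideanLin D g = T (T.adjoint g) + μ • g := by
    simp [hTT, D]
  rw [hPf, hf, hDg]
  exact T.norm_apply_adjoint_apply_mul_le g hμ.le

end Matrix

/-- The regularized projection `P^λ = J (JᵀJ + λ²I)⁻¹ Jᵀ` satisfies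
`‖P^λ f‖ ≤ (‖J‖²/(‖J‖² + λ²)) ‖f‖` for every `f ∈ ℝᵐ`, where `‖J‖` is the
`ℓ² → ℓ²` operator norm of `J`; in particular `‖P^λ f‖ < ‖f‖` for `f ≠ 0`. -/
theorem stmt_3 (m n : ℕ) (J : Matrix (Fin m) (Fin n) ℝ) (lam : ℝ) (hlam : 0 < lam) :
    (∀ f : EuclideanSpace ℝ (Fin m),
        ‖Matrix.toEuclideanLin
            (J * (Jᵀ * J + lam ^ 2 • (1 : Matrix (Fin n) (Fin n) ℝ))⁻¹ * Jᵀ) f‖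
          ≤ (‖LinearMap.toContinuousLinearMap (Matrix.toEuclideanLin J)‖ ^ 2 /
              (‖LinearMap.toContinuousLinearMap (Matrix.toEuclideanLin J)‖ ^ 2 + lam ^ 2))
            * ‖f‖) ∧
    ∀ f : EuclideanSpace ℝ (Fin m), f ≠ 0 →
      ‖Matrix.toEuclideanLin
          (J * (Jᵀ * J + lam ^ 2 • (1 : Matrix (Fin n) (Fin n) ℝ))⁻¹ * Jᵀ) f‖ < ‖f‖ := by
  have hμ : 0 < lam ^ 2 := by positivity
  set s := ‖LinearMap.toContinuousLinearMap (Matrix.toEuclideanLin J)‖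
  have hden : 0 < s ^ 2 + lam ^ 2 := by positivity
  have hbound : ∀ f : EuclideanSpace ℝ (Fin m),
      ‖Matrix.toEuclideanLin (Matrix.regularizedProjection J (lam ^ 2)) f‖
        ≤ s ^ 2 / (s ^ 2 + lam ^ 2) * ‖f‖ := fun f => by
    rw [div_mul_eq_mul_div, le_div_iff₀ hden]
    exact Matrix.norm_toEuclideanLin_regularizedProjection_mul_le J hμ f
  refine ⟨hbound, fun f hf => (hbound f).trans_lt ?_⟩
  exact mul_lt_of_lt_one_left (norm_pos_iff.2 hf) ((div_lt_one hden).2 (by linarith))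
end

section
/- Let u, v : ℝ → ℝ be continuously differentiable with compact support, and let M_v = sup_{x∈ℝ} |v′(x)| and M_u = sup_{x∈ℝ} |u′(x)|. Then |∫_ℝ (v(x) − u(x))·(v(x)v′(x) − u(x)u′(x)) dx| ≤ ((1/2)M_v + M_u) ∫_ℝ (v(x) − u(x))² dx. -/
/-!
With `w = v - u` one has `(v - u) (v v' - u u') = (u' - v'/2) w² + (v w² / 2)'`. The exact
derivative integrates to zero, and the remaining term is bounded pointwise by `(M_u + M_v/2) w²`.
-/

open MeasureTheory

theorem Continuous.integrable_of_vanishing_with_hasCompactSupport {X E F : Type*}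
    [MeasurableSpace X] [TopologicalSpace X] [OpensMeasurableSpace X] {μ : Measure X}
    [IsFiniteMeasureOnCompacts μ] [NormedAddCommGroup E] [NormedAddCommGroup F]
    {f : X → E} {g : X → F} (hg : Continuous g) (hf : HasCompactSupport f)
    (hgf : ∀ x, f x = 0 → g x = 0) : Integrable g μ :=
  hg.integrable_of_hasCompactSupport (hf.mono fun x hx h0 => hx (hgf x h0))

theorem HasCompactSupport.abs_le_iSup_abs {X : Type*} [TopologicalSpace X] {g : X → ℝ}
    (hgs : HasCompactSupport g) (hg : Continuous g) (x : X) : |g x| ≤ ⨆ y, |g y| :=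
  le_ciSup (hg.norm.bddAbove_range_of_hasCompactSupport hgs.norm) x

theorem integral_sub_mul_sub_mul_deriv {u v : ℝ → ℝ} (hu : ContDiff ℝ 1 u) (hv : ContDiff ℝ 1 v)
    (hw : HasCompactSupport fun x => v x - u x) :
    ∫ x, (v x - u x) * (v x * deriv v x - u x * deriv u x)
      = ∫ x, (deriv u x - deriv v x / 2) * (v x - u x) ^ 2 := by
  set F' : ℝ → ℝ := fun x =>
    deriv v x / 2 * (v x - u x) ^ 2 + v x * ((v x - u x) * (deriv v x - deriv u x)) with hF'
  have hF : ∀ x, HasDerivAt (fun y => v y / 2 * (v y - u y) ^ 2) (F' x) x := by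
    intro x
    have hux := (hu.differentiable one_ne_zero x).hasDerivAt
    have hvx := (hv.differentiable one_ne_zero x).hasDerivAt
    refine ((hvx.div_const 2).mul ((hvx.sub hux).pow 2)).congr_deriv ?_
    simp only [hF', Pi.sub_apply, Pi.pow_apply]
    ring
  have hu' := hu.continuous_deriv le_rfl
  have hv' := hv.continuous_deriv le_rfl
  have hF'_int : Integrable F' :=
    (by fun_prop : Continuous F').integrable_of_vanishing_with_hasCompactSupport hw
      fun x hx => by simp [hF', hx]
  have hF_int : Integrable fun y => v y / 2 * (v y - u y) ^ 2 :=
    (by fun_prop : Continuous _).integrable_of_vanishing_with_hasCompactSupport hw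
      fun x hx => by simp [hx]
  have hrest_int : Integrable fun x => (deriv u x - deriv v x / 2) * (v x - u x) ^ 2 :=
    (by fun_prop : Continuous _).integrable_of_vanishing_with_hasCompactSupport hw
      fun x hx => by simp [hx]
  calc ∫ x, (v x - u x) * (v x * deriv v x - u x * deriv u x)
      = ∫ x, ((deriv u x - deriv v x / 2) * (v x - u x) ^ 2 + F' x) := by
        congr 1; ext x; rw [hF']; ring
    _ = ∫ x, (deriv u x - deriv v x / 2) * (v x - u x) ^ 2 := by
        rw [integral_add hrest_int hF'_int,
          integral_eq_zero_of_hasDerivAt_of_integrable hF hF'_int hF_int, add_zero]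

/-- Nonlinear term bound:
`|∫ (v−u)(v v′ − u u′)| ≤ ((1/2)·sup|v′| + sup|u′|) ∫ (v−u)²`
for `C¹` compactly supported `u, v`. -/
theorem stmt_11 (u v : ℝ → ℝ) (hu : ContDiff ℝ 1 u) (hv : ContDiff ℝ 1 v)
    (hus : HasCompactSupport u) (hvs : HasCompactSupport v) :
    |∫ x : ℝ, (v x - u x) * (v x * deriv v x - u x * deriv u x)|
      ≤ ((1 / 2) * (⨆ x : ℝ, |deriv v x|) + ⨆ x : ℝ, |deriv u x|) *
          ∫ x : ℝ, (v x - u x) ^ 2 := by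
  have hw : HasCompactSupport fun x => v x - u x := hvs.sub hus
  have hsq_int : Integrable fun x => (v x - u x) ^ 2 :=
    (by fun_prop : Continuous _).integrable_of_vanishing_with_hasCompactSupport hw
      fun x hx => by simp [hx]
  rw [integral_sub_mul_sub_mul_deriv hu hv hw, ← integral_const_mul, ← Real.norm_eq_abs]
  refine norm_integral_le_of_norm_le (hsq_int.const_mul _) (ae_of_all _ fun x => ?_)
  have hu'_le := hus.deriv.abs_le_iSup_abs (hu.continuous_deriv le_rfl) x
  have hv'_le := hvs.deriv.abs_le_iSup_abs (hv.continuous_deriv le_rfl) x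
  calc ‖(deriv u x - deriv v x / 2) * (v x - u x) ^ 2‖
      ≤ (|deriv u x| + |deriv v x| / 2) * (v x - u x) ^ 2 := by
        rw [Real.norm_eq_abs, abs_mul, abs_sq]
        gcongr
        exact (abs_sub _ _).trans_eq (by rw [abs_div, abs_two])
    _ ≤ _ := by gcongr ?_ * _; linarith
end
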